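/- Let n > 2, q > 1, 0 < d < 1, k > 0, and suppose 0 ≤ u ≤ k is a solution of u'' + ((n-1)/r)u' = -u^q on (d,1) with u(1) = 0, u(d) = k. Then u(x) ≤ C'₁ x^(2-n) + C'₂ x² + C'₃, where C'₁, C'₂, C'₃ are the constants obtained from the explicit solution of w'' + ((n-1)/x)w' = -k^q, w(1)=0, w(d)=k; namely C'₁ = 2C̃'₁ - C̃'₂, C'₂ = (n-2)C̃'₁, C'₃ = C̃'₂ - nC̃'₁ with C̃'₁ = -k^q/(2n(n-2)) and C̃'₂ = -(k - D'₀)/(d^(2-n)-1), D'₀ = C̃'₁(2d^(2-n) + (n-2)d² - n). -/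

import Mathlib

/-!
The comparison function `w x = C₁ x ^ (2 - n) + C₂ x ^ 2 + C₃` satisfies
`w'' + (n - 1) / x * w' = 2 n C₂ = -k ^ q`, `w 1 = 0` and `w d = k`. As `0 ≤ u ≤ k`, the difference
`v = w - u` has `(r ^ (n - 1) v')' = r ^ (n - 1) (u ^ q - k ^ q) ≤ 0`, so `r ^ (n - 1) v'` is
nonincreasing. Were `v` negative somewhere in `(d, 1)`, the mean value theorem applied on both sides
of that point would give `v' < 0` before a point where `v' > 0`, a contradiction.
-/

open Set

theorem ContDiffOn.hasDerivAt_deriv_of_isOpen {𝕜 F : Type*} [NontriviallyNormedField 𝕜]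
    [NormedAddCommGroup F] [NormedSpace 𝕜 F] {f : 𝕜 → F} {s : Set 𝕜} {x : 𝕜}
    (hf : ContDiffOn 𝕜 2 f s) (hs : IsOpen s) (hx : x ∈ s) :
    HasDerivAt f (deriv f x) x ∧ HasDerivAt (deriv f) (deriv (deriv f) x) x :=
  ⟨((hf.differentiableOn (by norm_num)).differentiableAt (hs.mem_nhds hx)).hasDerivAt,
    (((hf.deriv_of_isOpen hs (m := 1) (by norm_num)).differentiableOn one_ne_zero).differentiableAt
      (hs.mem_nhds hx)).hasDerivAt⟩

theorem nonneg_of_antitoneOn_mul_deriv {v v' ρ : ℝ → ℝ} {a b : ℝ}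
    (hv : ContinuousOn v (Icc a b)) (hv' : ∀ x ∈ Ioo a b, HasDerivAt v (v' x) x)
    (ha : 0 ≤ v a) (hb : 0 ≤ v b) (hρ : ∀ x ∈ Ioo a b, 0 < ρ x)
    (hanti : AntitoneOn (fun x => ρ x * v' x) (Ioo a b)) :
    ∀ x ∈ Icc a b, 0 ≤ v x := by
  intro x hx
  by_contra! hvx
  have hax : a < x := hx.1.lt_of_ne (by rintro rfl; linarith)
  have hxb : x < b := hx.2.lt_of_ne (by rintro rfl; linarith)
  obtain ⟨s, hs, hvs⟩ := exists_hasDerivAt_eq_slope v v' hax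
    (hv.mono (Icc_subset_Icc le_rfl hxb.le)) fun y hy => hv' y ⟨hy.1, hy.2.trans hxb⟩
  obtain ⟨t, ht, hvt⟩ := exists_hasDerivAt_eq_slope v v' hxb
    (hv.mono (Icc_subset_Icc hax.le le_rfl)) fun y hy => hv' y ⟨hax.trans hy.1, hy.2⟩
  have hs' : s ∈ Ioo a b := ⟨hs.1, hs.2.trans hxb⟩
  have ht' : t ∈ Ioo a b := ⟨hax.trans ht.1, ht.2⟩
  have hneg : ρ s * v' s < 0 :=
    mul_neg_of_pos_of_neg (hρ s hs') (hvs ▸ div_neg_of_neg_of_pos (by linarith) (by linarith))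
  have hpos : 0 < ρ t * v' t :=
    mul_pos (hρ t ht') (hvt ▸ div_pos (by linarith) (by linarith))
  linarith [hanti hs' ht' (hs.2.trans ht.1).le]

theorem HasDerivAt.rpow_const_mul_radial {g : ℝ → ℝ} {g' x : ℝ} (m : ℝ) (hx : 0 < x)
    (hg : HasDerivAt g g' x) :
    HasDerivAt (fun r => r ^ m * g r) (x ^ m * (g' + m / x * g x)) x := by
  refine ((Real.hasDerivAt_rpow_const (p := m) (Or.inl hx.ne')).mul hg).congr_deriv ?_
  rw [Real.rpow_sub_one hx.ne']
  field_simp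
  ring

theorem le_of_radialLaplacian_le {u u' u'' w w' w'' : ℝ → ℝ} {m a b : ℝ} (ha : 0 < a)
    (hu : ContinuousOn u (Icc a b)) (hu' : ∀ r ∈ Ioo a b, HasDerivAt u (u' r) r)
    (hu'' : ∀ r ∈ Ioo a b, HasDerivAt u' (u'' r) r)
    (hw : ContinuousOn w (Icc a b)) (hw' : ∀ r ∈ Ioo a b, HasDerivAt w (w' r) r)
    (hw'' : ∀ r ∈ Ioo a b, HasDerivAt w' (w'' r) r)
    (hle : ∀ r ∈ Ioo a b, w'' r + m / r * w' r ≤ u'' r + m / r * u' r)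
    (hua : u a ≤ w a) (hub : u b ≤ w b) :
    ∀ x ∈ Icc a b, u x ≤ w x := by
  have hpos : ∀ r ∈ Ioo a b, 0 < r := fun r hr => ha.trans hr.1
  have hflux : ∀ r ∈ Ioo a b, HasDerivAt (fun r => r ^ m * (w' r - u' r))
      (r ^ m * ((w'' r - u'' r) + m / r * (w' r - u' r))) r := fun r hr =>
    ((hw'' r hr).sub (hu'' r hr)).rpow_const_mul_radial m (hpos r hr)
  have hanti : AntitoneOn (fun r => r ^ m * (w' r - u' r)) (Ioo a b) := by
    refine antitoneOn_of_hasDerivWithinAt_nonpos (convex_Ioo a b)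
      (f' := fun r => r ^ m * ((w'' r - u'' r) + m / r * (w' r - u' r)))
      (fun r hr => (hflux r hr).continuousAt.continuousWithinAt) ?_ ?_
    · simpa only [interior_Ioo] using fun r hr => (hflux r hr).hasDerivWithinAt
    · rw [interior_Ioo]
      intro r hr
      exact mul_nonpos_of_nonneg_of_nonpos (Real.rpow_nonneg (hpos r hr).le m)
        (by linarith [hle r hr])
  intro x hx
  exact sub_nonneg.1 <| nonneg_of_antitoneOn_mul_deriv (hw.sub hu)
    (fun r hr => (hw' r hr).sub (hu' r hr)) (sub_nonneg.2 hua) (sub_nonneg.2 hub)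
    (fun r hr => Real.rpow_pos_of_pos (hpos r hr) m) hanti x hx

noncomputable def radialProfile (p C₁ C₂ C₃ x : ℝ) : ℝ := C₁ * x ^ (2 - p) + C₂ * x ^ 2 + C₃

section radialProfile

variable {p C₁ C₂ C₃ x : ℝ}

theorem hasDerivAt_radialProfile (hx : 0 < x) :
    HasDerivAt (radialProfile p C₁ C₂ C₃) (C₁ * (2 - p) * x ^ (1 - p) + 2 * C₂ * x) x := by
  have h := (((Real.hasDerivAt_rpow_const (p := 2 - p) (Or.inl hx.ne')).const_mul C₁).add
    ((hasDerivAt_pow 2 x).const_mul C₂)).add_const C₃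
  refine h.congr_deriv ?_
  rw [show (2 : ℝ) - p - 1 = 1 - p by ring]
  push_cast
  ring

theorem hasDerivAt_radialProfile_deriv (hx : 0 < x) :
    HasDerivAt (fun x => C₁ * (2 - p) * x ^ (1 - p) + 2 * C₂ * x)
      (C₁ * (2 - p) * (1 - p) * x ^ (-p) + 2 * C₂) x := by
  have h := ((Real.hasDerivAt_rpow_const (p := 1 - p) (Or.inl hx.ne')).const_mul
    (C₁ * (2 - p))).add ((hasDerivAt_id x).const_mul (2 * C₂))
  refine h.congr_deriv ?_
  rw [show (1 : ℝ) - p - 1 = -p by ring]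

  ring

theorem radialProfile_radialLaplacian (hx : 0 < x) :
    C₁ * (2 - p) * (1 - p) * x ^ (-p) + 2 * C₂
      + (p - 1) / x * (C₁ * (2 - p) * x ^ (1 - p) + 2 * C₂ * x) = 2 * p * C₂ := by
  rw [sub_eq_add_neg (1 : ℝ), Real.rpow_add hx, Real.rpow_one]
  field_simp
  ring

theorem continuousOn_radialProfile {s : Set ℝ} (hs : ∀ x ∈ s, 0 < x) :
    ContinuousOn (radialProfile p C₁ C₂ C₃) s := fun x hx =>
  (hasDerivAt_radialProfile (hs x hx)).continuousAt.continuousWithinAt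

end radialProfile

theorem stmt9_general (n : ℕ) (hn : 2 < n) (q d k : ℝ) (hq : 1 < q)
    (hd0 : 0 < d) (hd1 : d < 1)
    (u : ℝ → ℝ) (hu : ContDiffOn ℝ 2 u (Icc d 1))
    (hode : ∀ r ∈ Ioo d 1,
      deriv (deriv u) r + (((n : ℝ) - 1) / r) * deriv u r = -(u r ^ q))
    (hb1 : u 1 = 0) (hbd : u d = k)
    (hbounds : ∀ x ∈ Icc d 1, 0 ≤ u x ∧ u x ≤ k)
    (Ct₁ Ct₂ D₀ C₁ C₂ C₃ : ℝ)
    (hCt₁ : Ct₁ = -(k ^ q) / (2 * n * ((n : ℝ) - 2)))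
    (hD₀ : D₀ = Ct₁ * (2 * d ^ ((2 : ℝ) - n) + ((n : ℝ) - 2) * d ^ 2 - n))
    (hCt₂ : Ct₂ = -(k - D₀) / (d ^ ((2 : ℝ) - n) - 1))
    (hC₁ : C₁ = 2 * Ct₁ - Ct₂)
    (hC₂ : C₂ = ((n : ℝ) - 2) * Ct₁)
    (hC₃ : C₃ = Ct₂ - n * Ct₁) :
    ∀ x ∈ Icc d 1, u x ≤ C₁ * x ^ ((2 : ℝ) - n) + C₂ * x ^ 2 + C₃ := by
  have hn2 : (2 : ℝ) < n := by exact_mod_cast hn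
  have hdpow : d ^ ((2 : ℝ) - n) - 1 ≠ 0 :=
    (sub_pos.2 (Real.one_lt_rpow_of_pos_of_lt_one_of_neg hd0 hd1 (by linarith))).ne'
  have hW1 : radialProfile n C₁ C₂ C₃ 1 = 0 := by
    simp only [radialProfile, Real.one_rpow, one_pow, hC₁, hC₂, hC₃]
    ring
  have hWd : radialProfile n C₁ C₂ C₃ d = k := by
    simp only [radialProfile, hC₁, hC₂, hC₃, hCt₂, hD₀]
    field_simp
    ring
  have hlap : 2 * n * C₂ = -(k ^ q) := by
    rw [hC₂, hCt₁]
    field_simp [(by linarith : (n : ℝ) - 2 ≠ 0)]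
  have hu' := fun r (hr : r ∈ Ioo d 1) => (hu.mono Ioo_subset_Icc_self).hasDerivAt_deriv_of_isOpen
    isOpen_Ioo hr
  refine le_of_radialLaplacian_le (m := n - 1) hd0 hu.continuousOn (fun r hr => (hu' r hr).1)
    (fun r hr => (hu' r hr).2) (continuousOn_radialProfile fun r hr => hd0.trans_le hr.1)
    (fun r hr => hasDerivAt_radialProfile (hd0.trans hr.1))
    (fun r hr => hasDerivAt_radialProfile_deriv (hd0.trans hr.1)) (fun r hr => ?_)
    (hbd.trans hWd.symm).le (hb1.trans hW1.symm).le
  have hu_le := hbounds r (Ioo_subset_Icc_self hr)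
  rw [radialProfile_radialLaplacian (hd0.trans hr.1), hlap, hode r hr]
  exact neg_le_neg (Real.rpow_le_rpow hu_le.1 hu_le.2 (by linarith))

theorem stmt9 (n : ℕ) (hn : 2 < n) (q d k : ℝ) (hq : 1 < q)
    (hd0 : 0 < d) (hd1 : d < 1) (hk : 0 < k)
    (u : ℝ → ℝ) (hu : ContDiffOn ℝ 2 u (Icc d 1))
    (hode : ∀ r ∈ Ioo d 1,
      deriv (deriv u) r + (((n : ℝ) - 1) / r) * deriv u r = -(u r ^ q))
    (hb1 : u 1 = 0) (hbd : u d = k)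
    (hbounds : ∀ x ∈ Icc d 1, 0 ≤ u x ∧ u x ≤ k)
    (Ct₁ Ct₂ D₀ C₁ C₂ C₃ : ℝ)
    (hCt₁ : Ct₁ = -(k ^ q) / (2 * n * ((n : ℝ) - 2)))
    (hD₀ : D₀ = Ct₁ * (2 * d ^ ((2 : ℝ) - n) + ((n : ℝ) - 2) * d ^ 2 - n))
    (hCt₂ : Ct₂ = -(k - D₀) / (d ^ ((2 : ℝ) - n) - 1))
    (hC₁ : C₁ = 2 * Ct₁ - Ct₂)
    (hC₂ : C₂ = ((n : ℝ) - 2) * Ct₁)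
    (hC₃ : C₃ = Ct₂ - n * Ct₁) :
    ∀ x ∈ Icc d 1, u x ≤ C₁ * x ^ ((2 : ℝ) - n) + C₂ * x ^ 2 + C₃ :=
  stmt9_general n hn q d k hq hd0 hd1 u hu hode hb1 hbd hbounds Ct₁ Ct₂ D₀ C₁ C₂ C₃ hCt₁ hD₀ hCt₂
    hC₁ hC₂ hC₃
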